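/- arXiv:1808.01152 — 2 statements merged into one kernel-verified Lean document; each statement's English description precedes it below -/
import Mathlib

section
/- Let d ≥ 1, let u be an odd vertex of Q_d with neighborhood N_u ⊆ E, and let X ∪ Y be a partition of N_u with X ≠ ∅ and Y ≠ ∅. Let μ be a probability distribution on proper 4-colorings f of Q_d such that μ-almost surely f(x) ∈ {1,2} for all x ∈ X and f(y) ∈ {3,4} for all y ∈ Y. Then T_μ(u) := (1/d)·H(f_{N_u}) + H(f_u | f(N_u)) ≤ 1 + 4/d, where f is random with distribution μ. -/
open Finset

abbrev V (d : ℕ) : Type := Fin d → Bool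

def cube (d : ℕ) : SimpleGraph (V d) where
  Adj u v := (Finset.univ.filter fun i => u i ≠ v i).card = 1
  symm := by
    constructor
    intro u v h
    have e : (Finset.univ.filter fun i => v i ≠ u i) = (Finset.univ.filter fun i => u i ≠ v i) := by
      apply Finset.filter_congr
      intro i _
      exact ne_comm
    rw [e]
    exact h
  loopless := by
    constructor
    intro u h
    simp at h

instance cubeAdjDecidable (d : ℕ) : DecidableRel (cube d).Adj := fun u v =>
  decidable_of_iff ((Finset.univ.filter fun i => u i ≠ v i).card = 1) Iff.rfl

/-- a vertex of the hypercube is even if it has an even number of `true` coordinates. -/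
def isEven {d : ℕ} (v : V d) : Prop := Even (Finset.univ.filter fun i => v i = true).card

/-- `f` is a proper `q`-coloring of the `d`-dimensional hypercube. -/
def IsColoring (d q : ℕ) (f : V d → Fin q) : Prop :=
  ∀ u v : V d, (cube d).Adj u v → f u ≠ f v

open scoped Classical in
/-- The probability that the random variable `X` (on the finite probability space `(Ω, p)`)
takes the value `t`. -/
noncomputable def pr {Ω T : Type*} [Fintype Ω] (p : Ω → ℝ) (X : Ω → T) (t : T) : ℝ :=
  ∑ ω : Ω, if X ω = t then p ω else 0

/-- The binary (Shannon) entropy `H(X) = ∑_t P(X = t) log₂ (1 / P(X = t))`. -/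
noncomputable def ent {Ω T : Type*} [Fintype Ω] [Fintype T] (p : Ω → ℝ) (X : Ω → T) : ℝ :=
  ∑ t : T, pr p X t * Real.logb 2 (pr p X t)⁻¹

/-- The conditional entropy
`H(X | Y) = ∑_u P(Y = u) ∑_t P(X = t | Y = u) log₂ (1 / P(X = t | Y = u))`. -/
noncomputable def condEnt {Ω T U : Type*} [Fintype Ω] [Fintype T] [Fintype U]
    (p : Ω → ℝ) (X : Ω → T) (Y : Ω → U) : ℝ :=
  ∑ u : U, pr p Y u *
    ∑ t : T, (pr p (fun ω => (X ω, Y ω)) (t, u) / pr p Y u) *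
      Real.logb 2 ((pr p (fun ω => (X ω, Y ω)) (t, u) / pr p Y u))⁻¹

/-- `T_p(u) = (1/d) H(f_{N_u}) + H(f_u | f(N_u))`, where `f` is a random coloring with
distribution `p`, `f_{N_u}` is the restriction of `f` to the neighborhood of `u`, and
`f(N_u)` is the set of colors appearing on the neighborhood of `u`. -/
noncomputable def Tp (d : ℕ) (p : (V d → Fin 4) → ℝ) (u : V d) : ℝ :=
  (1 / (d : ℝ)) * ent p (fun f => fun v : {v : V d // (cube d).Adj u v} => f v.1) +
    condEnt p (fun f => f u)
      (fun f => Finset.image (fun v : {v : V d // (cube d).Adj u v} => f v.1) Finset.univ)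

/-! Let `W = f_{N_u}` and `Z = f(N_u)`. Almost surely `W` colors `X` from `{1,2}` and `Y` from
`{3,4}`, so it takes at most `2^d` values, and on the event `|Z| ≤ 2` it is constant on `X` and on
`Y`, leaving at most `4` values. Splitting `H(W)` along this event, of probability `q`, gives
`H(W) ≤ 2q + (1 - q) d + 1`. Since `f_u ∉ Z`, given `Z` the color `f_u` has at most `4 - |Z|`
possible values, and `|Z| ≥ 2`, so `H(f_u | Z) ≤ q`. Hence `T(u) ≤ 1 + (2q + 1)/d`. -/

open Real

theorem Real.sum_negMulLog_le {ι : Type*} (s : Finset ι) (a : ι → ℝ) (ha : ∀ i ∈ s, 0 ≤ a i)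
    {n : ℕ} (hn : #s ≤ n) :
    ∑ i ∈ s, negMulLog (a i) ≤ (∑ i ∈ s, a i) * log n + negMulLog (∑ i ∈ s, a i) := by
  rcases s.eq_empty_or_nonempty with rfl | hs
  · simp
  set k : ℝ := (#s : ℝ) with hk_def
  have hk : 0 < k := by rw [hk_def]; exact_mod_cast hs.card_pos
  have jensen := concaveOn_negMulLog.le_map_sum (t := s) (w := fun _ => k⁻¹)
    (p := a) (fun _ _ => by positivity) (by simp [k, hk.ne']) ha
  have hk_inv : negMulLog k⁻¹ = k⁻¹ * log k := by simp [negMulLog, log_inv]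
  simp only [smul_eq_mul, ← Finset.mul_sum, negMulLog_mul, hk_inv] at jensen
  calc ∑ i ∈ s, negMulLog (a i) = k * (k⁻¹ * ∑ i ∈ s, negMulLog (a i)) := by field_simp
    _ ≤ k * ((∑ i ∈ s, a i) * (k⁻¹ * log k) + k⁻¹ * negMulLog (∑ i ∈ s, a i)) := by gcongr
    _ = (∑ i ∈ s, a i) * log k + negMulLog (∑ i ∈ s, a i) := by field_simp
    _ ≤ _ := by
      gcongr
      · exact Finset.sum_nonneg ha
      · rw [hk_def]; exact_mod_cast hn

theorem mul_logb_inv_eq_negMulLog_div (x : ℝ) : x * logb 2 x⁻¹ = negMulLog x / log 2 := by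
  rw [logb, log_inv, negMulLog]; ring

theorem sum_mul_logb_inv_le {ι : Type*} (s : Finset ι) (a : ι → ℝ) (ha : ∀ i ∈ s, 0 ≤ a i)
    {n : ℕ} (hn : #{i ∈ s | a i ≠ 0} ≤ n) :
    ∑ i ∈ s, a i * logb 2 (a i)⁻¹ ≤
      (∑ i ∈ s, a i) * logb 2 n + (∑ i ∈ s, a i) * logb 2 (∑ i ∈ s, a i)⁻¹ := by
  have key := sum_negMulLog_le _ a (fun i hi => ha i (Finset.mem_filter.1 hi).1) hn
  have hsupp : ∑ i ∈ s with a i ≠ 0, negMulLog (a i) = ∑ i ∈ s, negMulLog (a i) :=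
    Finset.sum_filter_of_ne fun i _ h hi => h (by rw [hi, negMulLog_zero])
  rw [Finset.sum_filter_ne_zero, hsupp] at key
  simp only [mul_logb_inv_eq_negMulLog_div]
  rw [← Finset.sum_div, logb, ← mul_div_assoc, ← add_div]
  exact div_le_div_of_nonneg_right key (log_nonneg one_le_two)

theorem mul_logb_inv_add_mul_logb_inv_le_one (q : ℝ) :
    q * logb 2 q⁻¹ + (1 - q) * logb 2 (1 - q)⁻¹ ≤ 1 := by
  have h := binEntropy_le_log_two (p := q)
  rw [binEntropy] at h
  simp only [logb, ← mul_div_assoc, ← add_div]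
  rwa [div_le_one (log_pos one_lt_two)]

open scoped Classical in
noncomputable def prob {Ω : Type*} [Fintype Ω] (p : Ω → ℝ) (E : Ω → Prop) : ℝ :=
  ∑ ω : Ω, if E ω then p ω else 0

section FiniteProbability

variable {Ω T U : Type*} [Fintype Ω] {p : Ω → ℝ}

theorem pr_nonneg (hp0 : ∀ ω, 0 ≤ p ω) (X : Ω → T) (t : T) : 0 ≤ pr p X t :=
  Finset.sum_nonneg fun ω _ => by split_ifs <;> simp [hp0 ω]

theorem prob_le_one (hp0 : ∀ ω, 0 ≤ p ω) (hp1 : ∑ ω, p ω = 1) (E : Ω → Prop) : prob p E ≤ 1 :=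
  hp1 ▸ Finset.sum_le_sum fun ω _ => by split_ifs <;> simp [hp0 ω]

theorem prob_not (hp1 : ∑ ω, p ω = 1) (E : Ω → Prop) :
    prob p (fun ω => ¬ E ω) = 1 - prob p E := by
  classical
  rw [eq_sub_iff_add_eq, ← hp1, prob, prob, ← Finset.sum_add_distrib]
  exact Finset.sum_congr rfl fun ω _ => by split_ifs <;> simp_all

theorem sum_pr_filter [Fintype T] (X : Ω → T) (P : T → Prop) [DecidablePred P] :
    ∑ t with P t, pr p X t = prob p (fun ω => P (X ω)) := by
  classical
  simp only [pr, prob]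
  rw [Finset.sum_comm]
  refine Finset.sum_congr rfl fun ω _ => ?_
  simp [Finset.sum_ite_eq]

theorem exists_of_pr_ne_zero {X : Ω → T} {t : T} (h : pr p X t ≠ 0) :
    ∃ ω, p ω ≠ 0 ∧ X ω = t := by
  contrapose! h
  exact Finset.sum_eq_zero fun ω _ => by grind

theorem sum_pr_prod_mk [Fintype T] (X : Ω → T) (Y : Ω → U) (u : U) :
    ∑ t, pr p (fun ω => (X ω, Y ω)) (t, u) = pr p Y u := by
  classical
  simp only [pr]
  rw [Finset.sum_comm]
  refine Finset.sum_congr rfl fun ω _ => ?_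
  simp [Prod.ext_iff, ite_and, Finset.sum_ite_eq]

theorem ent_le_of_card_support [Fintype T] (hp0 : ∀ ω, 0 ≤ p ω) (hp1 : ∑ ω, p ω = 1)
    (X : Ω → T) (P : T → Prop) [DecidablePred P] {m n : ℕ}
    (hm : #{t | P t ∧ pr p X t ≠ 0} ≤ m) (hn : #{t | ¬ P t ∧ pr p X t ≠ 0} ≤ n) :
    ent p X ≤ prob p (fun ω => P (X ω)) * logb 2 m
      + (1 - prob p (fun ω => P (X ω))) * logb 2 n + 1 := by
  have hA := sum_mul_logb_inv_le {t | P t} (pr p X) (fun _ _ => pr_nonneg hp0 X _)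
    (n := m) (by rwa [Finset.filter_filter])
  have hB := sum_mul_logb_inv_le {t | ¬ P t} (pr p X) (fun _ _ => pr_nonneg hp0 X _)
    (n := n) (by rwa [Finset.filter_filter])
  rw [sum_pr_filter] at hA hB
  rw [prob_not hp1] at hB
  have := mul_logb_inv_add_mul_logb_inv_le_one (prob p fun ω => P (X ω))
  rw [ent, ← Finset.sum_filter_add_sum_filter_not _ P]
  linarith

theorem condEnt_le_of_card_support [Fintype T] [Fintype U] (hp0 : ∀ ω, 0 ≤ p ω)
    (X : Ω → T) (Y : Ω → U) {n : U → ℕ}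
    (hn : ∀ u, pr p Y u ≠ 0 → #{t | pr p (fun ω => (X ω, Y ω)) (t, u) ≠ 0} ≤ n u) :
    condEnt p X Y ≤ ∑ u, pr p Y u * logb 2 (n u) := by
  refine Finset.sum_le_sum fun u _ => ?_
  by_cases hu : pr p Y u = 0
  · simp [hu]
  have hpos : 0 < pr p Y u := (pr_nonneg hp0 Y u).lt_of_ne' hu
  have hsum : ∑ t, pr p (fun ω => (X ω, Y ω)) (t, u) / pr p Y u = 1 := by
    rw [← Finset.sum_div, sum_pr_prod_mk, div_self hu]
  have key := sum_mul_logb_inv_le Finset.univ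
    (fun t => pr p (fun ω => (X ω, Y ω)) (t, u) / pr p Y u)
    (fun t _ => div_nonneg (pr_nonneg hp0 _ _) hpos.le) (n := n u)
    (by simpa [hu] using hn u hu)
  rw [hsum] at key
  simp only [one_mul, inv_one, logb_one, add_zero] at key
  exact mul_le_mul_of_nonneg_left key hpos.le

end FiniteProbability

theorem card_cube_adj_le (d : ℕ) (u : V d) : Fintype.card {v // (cube d).Adj u v} ≤ d := by
  classical
  rw [Fintype.card_subtype]
  calc #{v | (cube d).Adj u v}
      ≤ #(powersetCard 1 (univ : Finset (Fin d))) := by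
        refine card_le_card_of_injOn (fun v => ({i | u i ≠ v i} : Finset (Fin d)))
          (fun v hv => ?_) ?_
        · exact mem_powersetCard.2 ⟨subset_univ _, (mem_filter.1 hv).2⟩
        · intro v _ v' _ h
          funext i
          have := congrArg (i ∈ ·) h
          simp only [mem_filter, mem_univ, true_and] at this
          revert this
          cases u i <;> cases v i <;> cases v' i <;> simp
    _ = d := by simp

theorem eq_or_eq_of_card_image_le_two {ι α : Type*} [Fintype ι] [DecidableEq α] {w : ι → α}
    {a b : ι} (h : #(univ.image w) ≤ 2) (hab : w a ≠ w b) (i : ι) : w i = w a ∨ w i = w b := by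
  by_contra! hi
  have : 2 < #(univ.image w) := Finset.two_lt_card_iff.2
    ⟨w i, w a, w b, mem_image_of_mem w (mem_univ i), mem_image_of_mem w (mem_univ a),
      mem_image_of_mem w (mem_univ b), hi.1, hi.2, hab⟩
  omega

section SplitColorings

variable {ι : Type*} [Fintype ι] [DecidableEq ι]

def splitColorings (A : Finset ι) : Finset (ι → Fin 4) :=
  Fintype.piFinset fun i => if i ∈ A then {0, 1} else {2, 3}

variable {A : Finset ι} {w : ι → Fin 4} {a b : ι}

theorem card_splitColorings (A : Finset ι) : #(splitColorings A) = 2 ^ Fintype.card ι := by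
  rw [splitColorings, Fintype.card_piFinset, ← Finset.card_univ, ← Finset.prod_const]
  exact Finset.prod_congr rfl fun i _ => by split_ifs <;> rfl

theorem ne_of_mem_splitColorings (hw : w ∈ splitColorings A) (ha : a ∈ A) (hb : b ∉ A) :
    w a ≠ w b := by
  have hwa := Fintype.mem_piFinset.1 hw a
  have hwb := Fintype.mem_piFinset.1 hw b
  rw [if_pos ha] at hwa
  rw [if_neg hb] at hwb
  revert hwa hwb
  generalize w a = x
  generalize w b = y
  decide +revert

theorem two_le_card_image_of_mem_splitColorings (hw : w ∈ splitColorings A) (ha : a ∈ A)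
    (hb : b ∉ A) : 2 ≤ #(univ.image w) :=
  Finset.one_lt_card.2 ⟨w a, mem_image_of_mem w (mem_univ a), w b,
    mem_image_of_mem w (mem_univ b), ne_of_mem_splitColorings hw ha hb⟩

theorem eq_ite_of_mem_splitColorings (hw : w ∈ splitColorings A) (h2 : #(univ.image w) ≤ 2)
    (ha : a ∈ A) (hb : b ∉ A) (i : ι) : w i = if i ∈ A then w a else w b := by
  have hab := ne_of_mem_splitColorings hw ha hb
  split_ifs with hi
  · exact (eq_or_eq_of_card_image_le_two h2 hab i).resolve_right
      (ne_of_mem_splitColorings hw hi hb)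
  · exact (eq_or_eq_of_card_image_le_two h2 hab i).resolve_left
      (ne_of_mem_splitColorings hw ha hi).symm

theorem card_filter_splitColorings_le (ha : a ∈ A) (hb : b ∉ A) :
    #{w ∈ splitColorings A | #(univ.image w) ≤ 2} ≤ 4 := by
  calc #{w ∈ splitColorings A | #(univ.image w) ≤ 2}
      ≤ #(({0, 1} : Finset (Fin 4)) ×ˢ ({2, 3} : Finset (Fin 4))) := by
        refine card_le_card_of_injOn (fun w => (w a, w b)) (fun w hw => ?_) ?_
        · have hw := (mem_filter.1 hw).1
          simpa [ha, hb] using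
            And.intro (Fintype.mem_piFinset.1 hw a) (Fintype.mem_piFinset.1 hw b)
        · intro w hw w' hw' h
          simp only [coe_filter, Set.mem_ofPred_eq, Prod.mk.injEq] at hw hw' h
          funext i
          rw [eq_ite_of_mem_splitColorings hw.1 hw.2 ha hb,
            eq_ite_of_mem_splitColorings hw'.1 hw'.2 ha hb, h.1, h.2]
    _ = 4 := rfl

end SplitColorings

section SplitColoringEntropy

variable {Ω ι : Type*} [Fintype Ω] [Fintype ι] [DecidableEq ι] {p : Ω → ℝ}
  {W : Ω → ι → Fin 4} {A : Finset ι} {a b : ι}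

theorem ent_le_of_mem_splitColorings (hp0 : ∀ ω, 0 ≤ p ω) (hp1 : ∑ ω, p ω = 1)
    (hW : ∀ ω, p ω ≠ 0 → W ω ∈ splitColorings A) (ha : a ∈ A) (hb : b ∉ A) :
    ent p W ≤ 2 * prob p (fun ω => #(univ.image (W ω)) ≤ 2)
      + (1 - prob p (fun ω => #(univ.image (W ω)) ≤ 2)) * Fintype.card ι + 1 := by
  have hsupp : ∀ w, pr p W w ≠ 0 → w ∈ splitColorings A := fun w hw => by
    obtain ⟨ω, hω, rfl⟩ := exists_of_pr_ne_zero hw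
    exact hW ω hω
  have hm : #{w | #(univ.image w) ≤ 2 ∧ pr p W w ≠ 0} ≤ 4 :=
    (card_le_card fun w hw => by
      simp only [mem_filter, mem_univ, true_and] at hw ⊢
      exact ⟨hsupp w hw.2, hw.1⟩).trans (card_filter_splitColorings_le ha hb)
  have hn : #{w | ¬ #(univ.image w) ≤ 2 ∧ pr p W w ≠ 0} ≤ 2 ^ Fintype.card ι :=
    (card_le_card fun w hw => hsupp w (mem_filter.1 hw).2.2).trans
      (card_splitColorings A).le
  have h4 : logb 2 ((4 : ℕ) : ℝ) = 2 := by
    rw [show ((4 : ℕ) : ℝ) = 2 ^ 2 by norm_num, logb_pow, logb_self_eq_one one_lt_two]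
    norm_num
  have h2 : logb 2 ((2 ^ Fintype.card ι : ℕ) : ℝ) = Fintype.card ι := by
    rw [Nat.cast_pow, Nat.cast_ofNat, logb_pow, logb_self_eq_one one_lt_two, mul_one]
  have h := ent_le_of_card_support hp0 hp1 W _ hm hn
  rw [h4, h2] at h
  linarith

theorem logb_four_sub_le {k : ℕ} (h2 : 2 ≤ k) (h4 : k ≤ 4) :
    logb 2 ((4 - k : ℕ) : ℝ) ≤ if k ≤ 2 then 1 else 0 := by
  interval_cases k <;> norm_num

theorem condEnt_le_of_mem_splitColorings (hp0 : ∀ ω, 0 ≤ p ω) (c : Ω → Fin 4)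
    (hW : ∀ ω, p ω ≠ 0 → W ω ∈ splitColorings A) (ha : a ∈ A) (hb : b ∉ A)
    (hc : ∀ ω, p ω ≠ 0 → ∀ i, c ω ≠ W ω i) :
    condEnt p c (fun ω => univ.image (W ω)) ≤ prob p (fun ω => #(univ.image (W ω)) ≤ 2) := by
  set Z := fun ω => univ.image (W ω)
  have hn : ∀ S, pr p Z S ≠ 0 → #{t | pr p (fun ω => (c ω, Z ω)) (t, S) ≠ 0} ≤ 4 - #S := by
    intro S _
    calc #{t | pr p (fun ω => (c ω, Z ω)) (t, S) ≠ 0} ≤ #Sᶜ := card_le_card fun t ht => by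
          obtain ⟨ω, hω, hcZ⟩ := exists_of_pr_ne_zero (mem_filter.1 ht).2
          obtain ⟨rfl, rfl⟩ := Prod.mk.inj hcZ
          simpa [Z, eq_comm] using hc ω hω
      _ = 4 - #S := by rw [card_compl, Fintype.card_fin]
  calc condEnt p c Z ≤ ∑ S, pr p Z S * logb 2 ((4 - #S : ℕ) : ℝ) :=
        condEnt_le_of_card_support hp0 c Z hn
    _ ≤ ∑ S, if #S ≤ 2 then pr p Z S else 0 := sum_le_sum fun S _ => by
        by_cases hS : pr p Z S = 0
        · simp [hS]
        obtain ⟨ω, hω, rfl⟩ := exists_of_pr_ne_zero hS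
        have h2 := two_le_card_image_of_mem_splitColorings (hW ω hω) ha hb
        have := mul_le_mul_of_nonneg_left (logb_four_sub_le h2 (card_le_univ _))
          (pr_nonneg hp0 Z (Z ω))
        simpa [mul_ite] using this
    _ = prob p (fun ω => #(Z ω) ≤ 2) := by rw [← sum_filter, sum_pr_filter]

end SplitColoringEntropy

open scoped Classical in
theorem restrict_mem_splitColorings {d : ℕ} {u : V d} {X Y : Set (V d)}
    (hXY : X ∪ Y = (cube d).neighborSet u) {f : V d → Fin 4}
    (hX : ∀ x ∈ X, f x ∈ ({0, 1} : Finset (Fin 4)))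
    (hY : ∀ y ∈ Y, f y ∈ ({2, 3} : Finset (Fin 4))) :
    (fun v : {v // (cube d).Adj u v} => f v.1) ∈ splitColorings {v | v.1 ∈ X} :=
  Fintype.mem_piFinset.2 fun v => by
    by_cases hv : v.1 ∈ X
    · simpa [hv] using hX v.1 hv
    · have hvXY : v.1 ∈ X ∪ Y := hXY ▸ v.2
      simpa [hv] using hY v.1 (hvXY.resolve_left hv)

theorem T_le_one_general (d : ℕ) (hd : 1 ≤ d) (u : V d)
    (X Y : Set (V d)) (hXY : X ∪ Y = (cube d).neighborSet u) (hdisj : Disjoint X Y)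
    (hX : X.Nonempty) (hY : Y.Nonempty)
    (p : (V d → Fin 4) → ℝ) (hp0 : ∀ f, 0 ≤ p f) (hp1 : ∑ f : V d → Fin 4, p f = 1)
    (hcol : ∀ f, p f ≠ 0 → IsColoring d 4 f)
    (hgood : ∀ f, p f ≠ 0 → ∀ x ∈ X, f x ∈ ({0, 1} : Finset (Fin 4)))
    (hbad : ∀ f, p f ≠ 0 → ∀ y ∈ Y, f y ∈ ({2, 3} : Finset (Fin 4))) :
    Tp d p u ≤ 1 + 4 / (d : ℝ) := by
  classical
  obtain ⟨x, hx⟩ := hX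
  obtain ⟨y, hy⟩ := hY
  have hN : ∀ v ∈ X ∪ Y, (cube d).Adj u v := fun v hv => by rwa [hXY] at hv
  have hxA : ⟨x, hN x (Or.inl hx)⟩ ∈ ({v | v.1 ∈ X} : Finset {v // (cube d).Adj u v}) := by
    simpa using hx
  have hyA : ⟨y, hN y (Or.inr hy)⟩ ∉ ({v | v.1 ∈ X} : Finset {v // (cube d).Adj u v}) := by
    simpa using Set.disjoint_right.1 hdisj hy
  have hW := fun f hf => restrict_mem_splitColorings hXY (hgood f hf) (hbad f hf)
  have hent := ent_le_of_mem_splitColorings hp0 hp1 hW hxA hyA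
  have hcond := condEnt_le_of_mem_splitColorings hp0 (fun f => f u) hW hxA hyA
    fun f hf v => hcol f hf u v.1 v.2
  set q := prob p fun f => #(univ.image fun v : {v // (cube d).Adj u v} => f v.1) ≤ 2
  have hq1 : q ≤ 1 := prob_le_one hp0 hp1 _
  have hcard : (Fintype.card {v // (cube d).Adj u v} : ℝ) ≤ d := by
    exact_mod_cast card_cube_adj_le d u
  have hd0 : (0 : ℝ) < d := by exact_mod_cast hd
  calc Tp d p u ≤ 1 / d * (2 * q + (1 - q) * d + 1) + q := by
        unfold Tp
        gcongr
        linarith [mul_le_mul_of_nonneg_left hcard (sub_nonneg.2 hq1)]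
    _ = 1 + (2 * q + 1) / d := by field_simp; ring
    _ ≤ 1 + 4 / d := by gcongr; linarith

/-- If the neighborhood of an odd vertex `u` is partitioned into nonempty sets `X, Y`, and
`f` is a random proper 4-coloring which almost surely colors all of `X` with `{1,2}`
(good) and all of `Y` with `{3,4}` (bad), then
`T(u) = (1/d) H(f_{N_u}) + H(f_u | f(N_u)) ≤ 1 + 4/d`. -/
theorem T_le_one (d : ℕ) (hd : 1 ≤ d) (u : V d) (hu : ¬ isEven u)
    (X Y : Set (V d)) (hXY : X ∪ Y = (cube d).neighborSet u) (hdisj : Disjoint X Y)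
    (hX : X.Nonempty) (hY : Y.Nonempty)
    (p : (V d → Fin 4) → ℝ) (hp0 : ∀ f, 0 ≤ p f) (hp1 : ∑ f : V d → Fin 4, p f = 1)
    (hcol : ∀ f, p f ≠ 0 → IsColoring d 4 f)
    (hgood : ∀ f, p f ≠ 0 → ∀ x ∈ X, f x ∈ ({0, 1} : Finset (Fin 4)))
    (hbad : ∀ f, p f ≠ 0 → ∀ y ∈ Y, f y ∈ ({2, 3} : Finset (Fin 4))) :
    Tp d p u ≤ 1 + 4 / (d : ℝ) :=
  T_le_one_general d hd u X Y hXY hdisj hX hY p hp0 hp1 hcol hgood hbad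
end

section
/- There is an absolute constant K such that for all d ≥ 1, log₂ C_4(Q_d) ≤ N + K·N/d, where N = 2^d and C_4(Q_d) is the number of proper 4-colorings of Q_d. The same bound holds for log₂|Γ| for any nonempty set Γ of proper 4-colorings of Q_d. -/
open Finset

/-!
Colour the odd vertices last. Write `F y g` for the number of colours missing from `g` on the
neighbourhood of an odd vertex `y`. A colouring in `Γ` is determined by its values on the even
vertices together with a missing colour at each odd vertex, so `|Γ| ≤ 4 ^ (N / 2) · 𝔼_g ∏_y F y g`
for a uniformly random `g`. Every vertex lies in at most `d` of these neighbourhoods, so Finner's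
inequality (Hölder's inequality for functions of overlapping sets of coordinates) bounds
`(𝔼 ∏_y F y) ^ d` by `∏_y 𝔼 (F y) ^ d`, and `𝔼 (F y) ^ d ≤ 16` because `d` random colours seldom
miss two or more colours. Hence `|Γ| ^ d ≤ 2 ^ ((d + 2) N)`.
-/

open scoped BigOperators

/-- Weighted AM-GM, with the weight `(d - #J) / d` left over put on the value `1`. -/
theorem prod_rpow_inv_le_of_card_le {κ : Type*} {J : Finset κ} {d : ℕ} (hd : d ≠ 0)
    (hJ : #J ≤ d) {y : κ → ℝ} (hy : ∀ j ∈ J, 0 ≤ y j) :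
    ∏ j ∈ J, y j ^ (d⁻¹ : ℝ) ≤ (∑ j ∈ J, y j + (d - #J)) / d := by
  have hJR : (#J : ℝ) ≤ d := by exact_mod_cast hJ
  have amgm := Real.geom_mean_le_arith_mean_weighted (insertNone J)
    (fun o => o.elim ((d - #J) / d) fun _ => (d⁻¹ : ℝ)) (fun o => o.elim 1 y)
    (by rintro (_ | j) _ <;> simp only [Option.elim] <;> positivity)
    (by simp [sum_insertNone]; field_simp; ring)
    (by rintro (_ | j) hj <;> simp_all)
  simp only [prod_insertNone, sum_insertNone, Option.elim, Real.one_rpow, one_mul] at amgm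
  calc _ ≤ _ := amgm
    _ = _ := by rw [← mul_sum]; field_simp; ring

/-- Hölder's inequality for `#J ≤ d` functions with exponent `d` each, for the uniform probability
on `α`, stated without `d`-th roots. -/
theorem expect_pow_le_mul_prod_expect {α κ : Type*} [Fintype α] [Nonempty α] {J : Finset κ}
    {d : ℕ} (hJ : #J ≤ d) {T : α → ℝ} {a : κ → α → ℝ} {K : ℝ} (hT : ∀ x, 0 ≤ T x)
    (ha : ∀ j ∈ J, ∀ x, 0 ≤ a j x) (hK : 0 ≤ K) (h : ∀ x, T x ^ d ≤ K * ∏ j ∈ J, a j x) :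
    (𝔼 x, T x) ^ d ≤ K * ∏ j ∈ J, 𝔼 x, a j x := by
  obtain rfl | hd := eq_or_ne d 0
  · obtain rfl : J = ∅ := card_eq_zero.1 (Nat.le_zero.1 hJ)
    simpa using h (Classical.arbitrary α)
  set W : κ → ℝ := fun j => 𝔼 x, a j x
  set R := K * ∏ j ∈ J, W j
  have hW : ∀ j ∈ J, 0 ≤ W j := fun j hj => expect_nonneg fun x _ => ha j hj x
  have hR : 0 ≤ R := mul_nonneg hK (prod_nonneg hW)
  by_cases! hW0 : ∃ j ∈ J, W j = 0
  · obtain ⟨j, hj, hW0⟩ := hW0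
    have haj : a j = 0 := (Fintype.expect_eq_zero_iff_of_nonneg fun x => ha j hj x).1 hW0
    have hT0 : ∀ x, T x = 0 := fun x => by
      have := h x
      rw [prod_eq_zero hj (congrFun haj x), mul_zero] at this
      exact pow_eq_zero_iff hd |>.1 (le_antisymm this (pow_nonneg (hT x) d))
    simpa [hT0, zero_pow hd] using hR
  have hWpos : ∀ j ∈ J, 0 < W j := fun j hj => (hW j hj).lt_of_ne' (hW0 j hj)
  have hratio : ∀ j ∈ J, ∀ x, 0 ≤ a j x / W j := fun j hj x =>
    div_nonneg (ha j hj x) (hWpos j hj).le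
  have hpoint : ∀ x, T x ≤ R ^ (d⁻¹ : ℝ) * ((∑ j ∈ J, a j x / W j + (d - #J)) / d) := by
    intro x
    have hprod : K * ∏ j ∈ J, a j x = R * ∏ j ∈ J, a j x / W j := by
      rw [mul_assoc, ← prod_mul_distrib]
      exact congrArg _ (prod_congr rfl fun j hj => (mul_div_cancel₀ _ (hWpos j hj).ne').symm)
    calc T x = (T x ^ d) ^ (d⁻¹ : ℝ) := (Real.pow_rpow_inv_natCast (hT x) hd).symm
      _ ≤ (R * ∏ j ∈ J, a j x / W j) ^ (d⁻¹ : ℝ) := by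
        rw [← hprod]; exact Real.rpow_le_rpow (pow_nonneg (hT x) d) (h x) (by positivity)
      _ = R ^ (d⁻¹ : ℝ) * ∏ j ∈ J, (a j x / W j) ^ (d⁻¹ : ℝ) := by
        rw [Real.mul_rpow hR (prod_nonneg (hratio · · x)),
          Real.finsetProd_rpow _ _ (hratio · · x)]
      _ ≤ _ := by
        gcongr
        exact prod_rpow_inv_le_of_card_le hd hJ (hratio · · x)
  have hmean : 𝔼 x, T x ≤ R ^ (d⁻¹ : ℝ) := by
    calc 𝔼 x, T x ≤ 𝔼 x, R ^ (d⁻¹ : ℝ) * ((∑ j ∈ J, a j x / W j + (d - #J)) / d) :=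
          expect_le_expect fun x _ => hpoint x
      _ = R ^ (d⁻¹ : ℝ) := by
        rw [← mul_expect, ← expect_div, expect_add_distrib, expect_sum_comm,
          sum_congr rfl fun j hj => by rw [← expect_div, div_self (hWpos j hj).ne'],
          expect_const univ_nonempty, sum_const, nsmul_one, add_sub_cancel,
          div_self (by positivity), mul_one]
  calc (𝔼 x, T x) ^ d ≤ (R ^ (d⁻¹ : ℝ)) ^ d :=
        pow_le_pow_left₀ (expect_nonneg fun x _ => hT x) hmean d
    _ = R := Real.rpow_inv_natCast_pow hR hd

section ProductSpace

variable {ι C : Type*} [Fintype ι] [DecidableEq ι] [Fintype C]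

theorem expect_expect_update [Nonempty C] {M : Type*} [AddCommMonoid M] [Module ℚ≥0 M] (e : ι)
    (φ : (ι → C) → M) :
    𝔼 x, 𝔼 g, φ (Function.update g e x) = 𝔼 g, φ g := by
  have hinv : Function.Involutive fun p : C × (ι → C) => (p.2 e, Function.update p.2 e p.1) := by
    rintro ⟨x, g⟩
    simp
  calc 𝔼 x, 𝔼 g, φ (Function.update g e x)
      = 𝔼 p : C × (ι → C), φ (Function.update p.2 e p.1) := by
        rw [← univ_product_univ, expect_product]
    _ = 𝔼 p : C × (ι → C), φ p.2 := Fintype.expect_bijective _ hinv.bijective _ _ fun _ => rfl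
    _ = 𝔼 g, φ g := by
        rw [← univ_product_univ, expect_product]
        exact Fintype.expect_const (𝔼 g, φ g)

/-- Integrating out the coordinate `e`: the factors not involving `e` are constant in it, and the
at most `d` that do are handled by Hölder's inequality. -/
theorem pow_expect_prod_le_of_forall_update [Nonempty C] {κ : Type*} {d : ℕ} {s : Finset κ}
    {S : κ → Finset ι} {f : κ → (ι → C) → ℝ} (e : ι) (hf : ∀ j ∈ s, ∀ g, 0 ≤ f j g)
    (hdep : ∀ j ∈ s, DependsOn (f j) (S j)) (he : #{j ∈ s | e ∈ S j} ≤ d)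
    (hslice : ∀ x, (𝔼 g, ∏ j ∈ s, f j (Function.update g e x)) ^ d ≤
      ∏ j ∈ s, 𝔼 g, f j (Function.update g e x) ^ d) :
    (𝔼 g, ∏ j ∈ s, f j g) ^ d ≤ ∏ j ∈ s, 𝔼 g, f j g ^ d := by
  have hfix : ∀ j ∈ s, e ∉ S j → ∀ x g, f j (Function.update g e x) = f j g :=
    fun j hj heS x g => hdep j hj fun i hi =>
      Function.update_of_ne (ne_of_mem_of_not_mem hi heS) _ _
  have hsplit : ∀ F : κ → ℝ,
      ∏ j ∈ s, F j = (∏ j ∈ s with e ∉ S j, F j) * ∏ j ∈ s with e ∈ S j, F j :=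
    fun F => (prod_filter_not_mul_prod_filter s _ F).symm
  calc (𝔼 g, ∏ j ∈ s, f j g) ^ d
      = (𝔼 x, 𝔼 g, ∏ j ∈ s, f j (Function.update g e x)) ^ d :=
        congrArg (· ^ d) (expect_expect_update e _).symm
    _ ≤ (∏ j ∈ s with e ∉ S j, 𝔼 g, f j g ^ d) *
          ∏ j ∈ s with e ∈ S j, 𝔼 x, 𝔼 g, f j (Function.update g e x) ^ d := by
      refine expect_pow_le_mul_prod_expect he (fun x => ?_) (fun j hj x => ?_) ?_
        (fun x => (hslice x).trans_eq ?_)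
      · exact expect_nonneg fun g _ => prod_nonneg fun j hj => hf j hj _
      · exact expect_nonneg fun g _ => pow_nonneg (hf j (mem_filter.1 hj).1 _) d
      · exact prod_nonneg fun j hj =>
          expect_nonneg fun g _ => pow_nonneg (hf j (mem_filter.1 hj).1 _) d
      · rw [hsplit]
        congr 1
        refine prod_congr rfl fun j hj => ?_
        rw [mem_filter] at hj
        simp only [hfix j hj.1 hj.2]
    _ = ∏ j ∈ s, 𝔼 g, f j g ^ d := by
      rw [hsplit]
      exact congrArg _ (prod_congr rfl fun j _ => expect_expect_update e fun g => f j g ^ d)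

theorem pow_expect_prod_le_prod_expect_pow_of_subset [Nonempty C] {κ : Type*} (d : ℕ)
    (s : Finset κ) (A : Finset ι) :
    ∀ (S : κ → Finset ι) (f : κ → (ι → C) → ℝ), (∀ j ∈ s, ∀ g, 0 ≤ f j g) →
      (∀ j ∈ s, DependsOn (f j) (S j)) → (∀ j ∈ s, S j ⊆ A) → (∀ e, #{j ∈ s | e ∈ S j} ≤ d) →
      (𝔼 g, ∏ j ∈ s, f j g) ^ d ≤ ∏ j ∈ s, 𝔼 g, f j g ^ d := by
  induction A using Finset.induction_on with
  | empty =>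
    intro S f _ hdep hA _
    obtain ⟨g₀⟩ : Nonempty (ι → C) := inferInstance
    have hconst : ∀ g, ∀ j ∈ s, f j g = f j g₀ := fun g j hj =>
      hdep j hj fun e he => absurd (hA j hj he) (notMem_empty e)
    refine le_of_eq ?_
    calc (𝔼 g, ∏ j ∈ s, f j g) ^ d = (∏ j ∈ s, f j g₀) ^ d := by
          simp only [fun g => prod_congr rfl (hconst g), Fintype.expect_const]
      _ = ∏ j ∈ s, 𝔼 g, f j g ^ d := by
          rw [← prod_pow]
          exact prod_congr rfl fun j hj => by simp only [hconst _ j hj, Fintype.expect_const]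
  | insert e A _ ih =>
    intro S f hf hdep hA hcov
    refine pow_expect_prod_le_of_forall_update e hf hdep (hcov e) fun x =>
      ih (fun j => (S j).erase e) (fun j g => f j (Function.update g e x))
        (fun j hj g => hf j hj _) (fun j hj g g' hgg' => hdep j hj fun i hi => ?_)
        (fun j hj => subset_insert_iff.1 (hA j hj))
        (fun i => (card_le_card fun j hj => ?_).trans (hcov i))
    · obtain rfl | hie := eq_or_ne i e
      · simp
      · simp [Function.update_of_ne hie, hgg' i (by simpa [hie] using hi)]
    · simp only [mem_filter, mem_erase] at hj ⊢
      exact ⟨hj.1, hj.2.2⟩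

/-- Finner's inequality. -/
theorem pow_expect_prod_le_prod_expect_pow [Nonempty C] {κ : Type*} (d : ℕ) (s : Finset κ)
    (S : κ → Finset ι) (f : κ → (ι → C) → ℝ) (hf : ∀ j ∈ s, ∀ g, 0 ≤ f j g)
    (hdep : ∀ j ∈ s, DependsOn (f j) (S j)) (hcov : ∀ e, #{j ∈ s | e ∈ S j} ≤ d) :
    (𝔼 g, ∏ j ∈ s, f j g) ^ d ≤ ∏ j ∈ s, 𝔼 g, f j g ^ d :=
  pow_expect_prod_le_prod_expect_pow_of_subset d s univ S f hf hdep (fun _ _ => subset_univ _) hcov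

theorem expect_prod_apply_eq_prod_expect (h : ι → C → ℝ) :
    𝔼 g : ι → C, ∏ u, h u (g u) = ∏ u, 𝔼 x, h u x := by
  simp only [Fintype.expect_eq_sum_div_card, ← Fintype.prod_sum, prod_div_distrib, prod_const,
    Fintype.card_fun, Nat.cast_pow, card_univ]

theorem expect_prod_apply_eq_expect_pow [Nonempty C] (S : Finset ι) (h : C → ℝ) :
    𝔼 g : ι → C, ∏ u ∈ S, h (g u) = (𝔼 x, h x) ^ #S := by
  calc 𝔼 g : ι → C, ∏ u ∈ S, h (g u) = 𝔼 g : ι → C, ∏ u, if u ∈ S then h (g u) else 1 := by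
        simp only [Fintype.prod_ite_mem]
    _ = ∏ u, 𝔼 x, if u ∈ S then h x else 1 :=
        expect_prod_apply_eq_prod_expect fun u x => if u ∈ S then h x else 1
    _ = ∏ u, if u ∈ S then 𝔼 x, h x else 1 := prod_congr rfl fun u _ => by split_ifs <;> simp
    _ = ∏ u ∈ S, 𝔼 x, h x := Fintype.prod_ite_mem _ _
    _ = (𝔼 x, h x) ^ #S := prod_const _

/-- The integrand is the term `T = (S.image g)ᶜ` of `∑ T, #T ^ #S · [g misses T on S]`; a uniformly
random `g` misses `T` on `S` with probability `(#Tᶜ / q) ^ #S`, and `#T · #Tᶜ ≤ q ^ 2 / 4`. -/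
theorem expect_card_compl_image_pow_le [DecidableEq C] [Nonempty C] (S : Finset ι) :
    𝔼 g : ι → C, (#(S.image g)ᶜ : ℝ) ^ #S ≤ 2 ^ Fintype.card C * (Fintype.card C / 4 : ℝ) ^ #S := by
  set q : ℝ := (Fintype.card C : ℝ)
  have hq : 0 < q := by positivity
  have hpoint : ∀ g : ι → C, (#(S.image g)ᶜ : ℝ) ^ #S ≤
      ∑ T : Finset C, (#T : ℝ) ^ #S * ∏ u ∈ S, if g u ∈ Tᶜ then 1 else 0 := fun g => by
    refine le_of_eq_of_le ?_ (single_le_sum (fun T _ => ?_) (mem_univ (S.image g)ᶜ))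
    · rw [prod_eq_one fun u hu => if_pos (by simpa using mem_image_of_mem g hu), mul_one]
    · exact mul_nonneg (by positivity) (prod_nonneg fun u _ => by split_ifs <;> norm_num)
  have hmiss : ∀ T : Finset C, 𝔼 g : ι → C, ∏ u ∈ S, (if g u ∈ Tᶜ then 1 else 0 : ℝ) =
      (#Tᶜ / q) ^ #S := fun T => by
    rw [expect_prod_apply_eq_expect_pow S fun x => if x ∈ Tᶜ then (1 : ℝ) else 0,
      Fintype.expect_eq_sum_div_card, sum_boole, filter_mem_eq_inter, univ_inter]
  have hamgm : ∀ T : Finset C, (#T : ℝ) * (#Tᶜ / q) ≤ q / 4 := fun T => by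
    have hsum : (#T : ℝ) + #Tᶜ = q := by rw [← Nat.cast_add, card_add_card_compl]
    rw [← mul_div_assoc, div_le_div_iff₀ hq (by norm_num)]
    nlinarith [sq_nonneg ((#T : ℝ) - #Tᶜ)]
  calc 𝔼 g : ι → C, (#(S.image g)ᶜ : ℝ) ^ #S
      ≤ 𝔼 g : ι → C, ∑ T : Finset C, (#T : ℝ) ^ #S * ∏ u ∈ S, if g u ∈ Tᶜ then 1 else 0 :=
        expect_le_expect fun g _ => hpoint g
    _ = ∑ T : Finset C, ((#T : ℝ) * (#Tᶜ / q)) ^ #S := by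
        simp only [expect_sum_comm, ← mul_expect, hmiss, mul_pow]
    _ ≤ ∑ _T : Finset C, (q / 4) ^ #S :=
        sum_le_sum fun T _ => pow_le_pow_left₀ (by positivity) (hamgm T) _
    _ = 2 ^ Fintype.card C * (q / 4) ^ #S := by
        rw [sum_const, card_univ, Fintype.card_finset, nsmul_eq_mul, Nat.cast_pow, Nat.cast_ofNat]

end ProductSpace

/-- Overwriting `f ∈ Γ` on the independent set `Y` by arbitrary colours loses no information once
the old values `f y` are recorded, and each `f y` is a colour missing from the neighbourhood of `y`,
which avoids `Y` and so was not overwritten. -/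
theorem card_mul_pow_le_sum_prod_card_compl_image {V C : Type*} [Fintype V] [DecidableEq V]
    [Fintype C] [DecidableEq C] (G : SimpleGraph V) [DecidableRel G.Adj] {Y : Finset V}
    (hY : G.IsIndepSet Y) (Γ : Finset (V → C)) (hΓ : ∀ f ∈ Γ, ∀ u v, G.Adj u v → f u ≠ f v) :
    #Γ * Fintype.card C ^ #Y ≤ ∑ g : V → C, ∏ y ∈ Y, #((G.neighborFinset y).image g)ᶜ := by
  have hLHS : #Γ * Fintype.card C ^ #Y = #(Γ ×ˢ (univ : Finset (Y → C))) := by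
    simp [card_product]
  have hRHS : ∑ g : V → C, ∏ y ∈ Y, #((G.neighborFinset y).image g)ᶜ =
      #(univ.sigma fun g : V → C =>
        Fintype.piFinset fun y : Y => ((G.neighborFinset y).image g)ᶜ) := by
    rw [card_sigma]
    exact sum_congr rfl fun g _ => by rw [Fintype.card_piFinset]; exact (prod_coe_sort Y _).symm
  rw [hLHS, hRHS]
  refine card_le_card_of_injOn
    (fun p => ⟨fun v => if h : v ∈ Y then p.2 ⟨v, h⟩ else p.1 v, fun y => p.1 y⟩) ?_ ?_
  · rintro ⟨f, z⟩ hp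
    simp only [coe_product, coe_univ, Set.mem_prod, mem_coe, Set.mem_univ, and_true] at hp
    simp only [coe_sigma, Set.mem_sigma_iff, coe_univ, Set.mem_univ, mem_coe,
      Fintype.mem_piFinset, mem_compl, mem_image, SimpleGraph.mem_neighborFinset, true_and,
      not_exists, not_and]
    intro y u hyu
    have hu : u ∉ Y := fun hu => hY y.2 hu (G.ne_of_adj hyu) hyu
    rw [dif_neg hu]
    exact hΓ f hp u y hyu.symm
  · rintro ⟨f, z⟩ _ ⟨f', z'⟩ _ h
    simp only [Sigma.mk.injEq, heq_eq_eq, funext_iff] at h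
    obtain ⟨hg, hy⟩ := h
    have hf : f = f' := funext fun v => by
      by_cases hv : v ∈ Y
      · exact hy ⟨v, hv⟩
      · simpa [hv] using hg v
    subst hf
    simp only [Prod.mk.injEq, true_and]
    exact funext fun y => by simpa using hg y

theorem pow_expect_prod_card_compl_image_le {V C : Type*} [Fintype V] [DecidableEq V]
    [Fintype C] [DecidableEq C] [Nonempty C] (G : SimpleGraph V) [DecidableRel G.Adj] {d : ℕ}
    (hG : G.IsRegularOfDegree d) (Y : Finset V) :
    (𝔼 g : V → C, ∏ y ∈ Y, (#((G.neighborFinset y).image g)ᶜ : ℝ)) ^ d ≤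
      (2 ^ Fintype.card C * (Fintype.card C / 4 : ℝ) ^ d) ^ #Y := by
  have hdeg : ∀ v, #(G.neighborFinset v) = d := fun v => by
    rw [G.card_neighborFinset_eq_degree, hG.degree_eq]
  calc _ ≤ ∏ y ∈ Y, 𝔼 g : V → C, (#((G.neighborFinset y).image g)ᶜ : ℝ) ^ d :=
        pow_expect_prod_le_prod_expect_pow d Y (fun y => G.neighborFinset y) _
          (fun _ _ _ => by positivity) (fun y _ g g' h => by simp only [image_congr h])
          fun v => (card_le_card fun y hy => by
            simpa [SimpleGraph.adj_comm] using (mem_filter.1 hy).2).trans (hdeg v).le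
    _ ≤ ∏ _y ∈ Y, 2 ^ Fintype.card C * (Fintype.card C / 4 : ℝ) ^ d :=
        prod_le_prod (fun _ _ => expect_nonneg fun _ _ => by positivity)
          fun y _ => hdeg y ▸ expect_card_compl_image_pow_le _
    _ = _ := prod_const _

section Hypercube

variable {d : ℕ}

instance (v : V d) : Decidable (isEven v) := inferInstanceAs (Decidable (Even _))

def flipAt (u : V d) (i : Fin d) : V d := Function.update u i (!u i)

theorem cube_adj_flipAt (u : V d) (i : Fin d) : (cube d).Adj u (flipAt u i) := by
  change #(univ.filter fun j => u j ≠ flipAt u i j) = 1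
  rw [card_eq_one]
  refine ⟨i, ext fun j => ?_⟩
  rw [mem_filter, mem_singleton]
  obtain rfl | hji := eq_or_ne j i
  · simp [flipAt]
  · simp [flipAt, hji]

theorem exists_eq_flipAt_of_cube_adj {u v : V d} (h : (cube d).Adj u v) :
    ∃ i, v = flipAt u i := by
  obtain ⟨i, hi⟩ := card_eq_one.1 h
  refine ⟨i, funext fun j => ?_⟩
  have hj : u j ≠ v j ↔ j = i := by simpa using Finset.ext_iff.1 hi j
  obtain rfl | hji := eq_or_ne j i
  · rw [flipAt, Function.update_self]
    exact Bool.eq_not.2 (hj.2 rfl).symm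
  · rw [flipAt, Function.update_of_ne hji]
    exact (not_not.1 (hj.not.2 hji)).symm

theorem flipAt_injective (u : V d) : Function.Injective (flipAt u) := by
  intro i i' h
  by_contra hne
  simpa [flipAt, Function.update_of_ne hne] using congrFun h i

theorem flipAt_flipAt (u : V d) (i : Fin d) : flipAt (flipAt u i) i = u := by
  simp [flipAt]

theorem cube_isRegularOfDegree : (cube d).IsRegularOfDegree d := by
  intro u
  have : (cube d).neighborFinset u = univ.image (flipAt u) := by
    ext v
    simp only [SimpleGraph.mem_neighborFinset, mem_image, mem_univ, true_and]
    exact ⟨fun h => (exists_eq_flipAt_of_cube_adj h).imp fun i => Eq.symm,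
      fun ⟨i, hi⟩ => hi ▸ cube_adj_flipAt u i⟩
  rw [← SimpleGraph.card_neighborFinset_eq_degree, this,
    card_image_of_injective _ (flipAt_injective u), card_univ, Fintype.card_fin]

theorem isEven_flipAt (u : V d) (i : Fin d) : isEven (flipAt u i) ↔ ¬ isEven u := by
  unfold isEven
  rw [card_filter, card_filter, Fintype.sum_eq_add_sum_compl i, Fintype.sum_eq_add_sum_compl i,
    sum_congr rfl fun j hj => by rw [flipAt, Function.update_of_ne (by simpa using hj)]]
  cases h : u i <;> simp [flipAt, h, parity_simps]

theorem isEven_iff_not_of_cube_adj {u v : V d} (h : (cube d).Adj u v) :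
    isEven v ↔ ¬ isEven u := by
  obtain ⟨i, rfl⟩ := exists_eq_flipAt_of_cube_adj h
  exact isEven_flipAt u i

theorem cube_isIndepSet_odd : (cube d).IsIndepSet ↑({v | ¬ isEven v} : Finset (V d)) := by
  intro u hu v hv _ huv
  simp only [coe_filter, mem_univ, true_and, Set.mem_ofPred_eq] at hu hv
  exact hv ((isEven_iff_not_of_cube_adj huv).2 hu)

theorem two_mul_card_odd (hd : d ≠ 0) : 2 * #({v | ¬ isEven v} : Finset (V d)) = 2 ^ d := by
  have i : Fin d := ⟨0, Nat.pos_of_ne_zero hd⟩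
  have heven : #({v | isEven v} : Finset (V d)) = #({v | ¬ isEven v} : Finset (V d)) :=
    card_nbij' (flipAt · i) (flipAt · i) (fun v hv => by simpa [isEven_flipAt] using hv)
      (fun v hv => by simpa [isEven_flipAt] using hv) (fun v _ => flipAt_flipAt v i)
      (fun v _ => flipAt_flipAt v i)
  have htotal := card_filter_add_card_filter_not (s := (univ : Finset (V d))) (isEven ·)
  rw [card_univ, Fintype.card_fun, Fintype.card_bool, Fintype.card_fin] at htotal
  omega

end Hypercube

theorem card_pow_le_of_isColoring {d : ℕ} (hd : d ≠ 0) (Γ : Finset (V d → Fin 4))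
    (hΓ : ∀ f ∈ Γ, IsColoring d 4 f) : (#Γ : ℝ) ^ d ≤ 2 ^ ((d + 2) * 2 ^ d) := by
  set Y : Finset (V d) := {v | ¬ isEven v}
  set P := 𝔼 g : V d → Fin 4, ∏ y ∈ Y, (#(((cube d).neighborFinset y).image g)ᶜ : ℝ)
  have hY : 2 * #Y = 2 ^ d := two_mul_card_odd hd
  have hcount : (#Γ : ℝ) * 4 ^ #Y ≤ 4 ^ #Y * 4 ^ #Y * P := by
    have := card_mul_pow_le_sum_prod_card_compl_image (cube d) cube_isIndepSet_odd Γ hΓ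
    rw [Fintype.card_fin] at this
    simp only [P]
    rw [← pow_add, ← two_mul, hY, Fintype.expect_eq_sum_div_card (ι := V d → Fin 4),
      Fintype.card_fun, Fintype.card_fun, Fintype.card_bool, Fintype.card_fin, Fintype.card_fin,
      Nat.cast_pow, Nat.cast_ofNat, mul_div_cancel₀ _ (by positivity)]
    exact_mod_cast this
  have hP : P ^ d ≤ 16 ^ #Y := by
    have := pow_expect_prod_card_compl_image_le (C := Fin 4) (cube d) cube_isRegularOfDegree Y
    norm_num at this
    exact this
  have hΓP : (#Γ : ℝ) ≤ 4 ^ #Y * P :=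
    le_of_mul_le_mul_right (by linarith [hcount]) (by positivity : (0 : ℝ) < 4 ^ #Y)
  calc (#Γ : ℝ) ^ d ≤ (4 ^ #Y * P) ^ d := pow_le_pow_left₀ (by positivity) hΓP d
    _ ≤ (4 ^ #Y) ^ d * 16 ^ #Y := by rw [mul_pow]; gcongr
    _ = 2 ^ ((d + 2) * 2 ^ d) := by
        rw [← hY, show (4 : ℝ) = 2 ^ 2 by norm_num, show (16 : ℝ) = 2 ^ 4 by norm_num,
          ← pow_mul, ← pow_mul, ← pow_mul, ← pow_add]
        ring_nf

theorem logb_le_div_of_pow_le {b x : ℝ} {d n : ℕ} (hb : 1 < b) (hx : 0 ≤ x) (hd : d ≠ 0)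
    (h : x ^ d ≤ b ^ n) : Real.logb b x ≤ n / d := by
  obtain rfl | hx := hx.eq_or_lt
  · simp only [Real.logb_zero]
    positivity
  rw [le_div_iff₀ (by positivity), mul_comm, ← Real.logb_pow]
  calc Real.logb b (x ^ d) ≤ Real.logb b (b ^ n) := Real.logb_le_logb_of_le hb (pow_pos hx d) h
    _ = n := by rw [Real.logb_pow, Real.logb_self_eq_one hb, mul_one]

/-- `log₂ C₄(Q_d) ≤ N + O(N/d)`, and likewise for any nonempty family of proper
4-colorings of `Q_d`. -/
theorem log_count_colorings_le :
    ∃ K : ℝ, 0 < K ∧ ∀ d : ℕ, 1 ≤ d →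
      Real.logb 2 (Nat.card {f : V d → Fin 4 // IsColoring d 4 f} : ℝ) ≤
          (2 : ℝ) ^ d + K * (2 : ℝ) ^ d / d
      ∧ ∀ Γ : Finset (V d → Fin 4), Γ.Nonempty → (∀ f ∈ Γ, IsColoring d 4 f) →
          Real.logb 2 (Γ.card : ℝ) ≤ (2 : ℝ) ^ d + K * (2 : ℝ) ^ d / d := by
  classical
  refine ⟨2, two_pos, fun d hd => ?_⟩
  have hbound : ∀ Γ : Finset (V d → Fin 4), (∀ f ∈ Γ, IsColoring d 4 f) →
      Real.logb 2 #Γ ≤ (2 : ℝ) ^ d + 2 * (2 : ℝ) ^ d / d := fun Γ hΓ => by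
    have hd' : d ≠ 0 := by omega
    calc Real.logb 2 #Γ ≤ (((d + 2) * 2 ^ d : ℕ) : ℝ) / d :=
          logb_le_div_of_pow_le one_lt_two (Nat.cast_nonneg _) hd'
            (card_pow_le_of_isColoring hd' Γ hΓ)
      _ = (2 : ℝ) ^ d + 2 * (2 : ℝ) ^ d / d := by push_cast; field_simp
  refine ⟨?_, fun Γ _ hΓ => hbound Γ hΓ⟩
  rw [Nat.card_eq_fintype_card, Fintype.card_subtype]
  exact hbound _ fun f hf => (mem_filter.1 hf).2
end
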